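/- Under the hypotheses of Theorem 1, if additionally N is composite and 2^n ≥ N, then for any proper divisor e of N with 1 < e < N, there are infinitely many positive integers m such that (1 + 2^(2^n) + ... + 2^(2^(n+m)))/e is a composite integer divisible by N/e. -/

import Mathlib

/-!
Modulo `N` the power `2 ^ 2 ^ k` only depends on `2 ^ k` modulo `s = ord_N 2`, and
`2 ^ (n + k) ≡ 2 ^ k (mod s)`. So for `m = l + c * a` the first `l + 1` terms of the sum give
`k_l`, while the exponents of the remaining ones are `2 ^ (n + l + 1 + i) ≡ b * 2 ^ i (mod s)`,
periodic in `i` with period `a = ord_s 2`, each period contributing `k_b`: the sum is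
`≡ k_l + c * k_b (mod N)`. Since `gcd k_b N ∣ k_l` this vanishes for a whole residue class of `c`.
For those `m` the sum `S` is a multiple of `N` larger than `2 ^ 2 ^ n > N`, so
`S / e = (N / e) * (S / N)` with both factors at least `2`.
-/

open Finset Function

theorem Function.Periodic.sum_range_mul {M : Type*} [AddCommMonoid M] {f : ℕ → M} {a : ℕ}
    (hf : Periodic f a) (c : ℕ) :
    ∑ i ∈ range (c * a), f i = c • ∑ i ∈ range a, f i := by
  induction c with
  | zero => simp
  | succ c ih =>
    rw [add_mul, one_mul, sum_range_add, ih, succ_nsmul]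
    congr 1
    refine sum_congr rfl fun i _ => ?_
    rw [add_comm]
    simpa using hf.nat_mul c i

theorem sum_pow_two_pow_range_add_mul {R : Type*} [CommSemiring R] {x : R} {s n l a b : ℕ}
    (hx : x ^ s = 1) (hn : 2 ^ n ≡ 1 [MOD s]) (hb : 2 ^ (l + 1) ≡ b [MOD s])
    (ha : 2 ^ a ≡ 1 [MOD s]) (c : ℕ) :
    ∑ j ∈ range (l + 1 + c * a), x ^ 2 ^ (n + j) =
      ∑ j ∈ range (l + 1), x ^ 2 ^ j + c • ∑ i ∈ range a, x ^ (b * 2 ^ i) := by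
  have shift (j : ℕ) : 2 ^ (n + j) ≡ 2 ^ j [MOD s] := by
    simpa [pow_add] using hn.mul_right (2 ^ j)
  have hper : Periodic (fun i => x ^ (b * 2 ^ i)) a := fun i =>
    pow_eq_pow_of_modEq (by simpa [pow_add, mul_assoc] using ha.mul_left (b * 2 ^ i)) hx
  rw [sum_range_add, ← hper.sum_range_mul]
  congr 1 <;> refine sum_congr rfl fun j _ => pow_eq_pow_of_modEq ?_ hx
  · exact shift j
  · calc 2 ^ (n + (l + 1 + j)) ≡ 2 ^ (l + 1 + j) [MOD s] := shift _
      _ = 2 ^ (l + 1) * 2 ^ j := pow_add ..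
      _ ≡ b * 2 ^ j [MOD s] := hb.mul_right _

theorem Nat.exists_dvd_add_mul_of_gcd_dvd {k r N : ℕ} [NeZero N] (h : Nat.gcd k N ∣ r) :
    ∃ c, N ∣ r + c * k := by
  obtain ⟨q, rfl⟩ := h
  refine ⟨(-(k.gcdA N * q : ZMod N)).val, ?_⟩
  have hbez : ((k.gcd N : ℤ) : ZMod N) = k * k.gcdA N := by
    rw [Nat.gcd_eq_gcd_ab]; simp
  rw [← ZMod.natCast_eq_zero_iff]
  push_cast [ZMod.natCast_zmod_val]
  rw [← Int.cast_natCast (k.gcd N), hbez]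
  ring

theorem Nat.one_lt_div_of_dvd_of_lt {e N : ℕ} (he : e ∣ N) (heN : e < N) : 1 < N / e := by
  obtain ⟨d, rfl⟩ := he
  rcases Nat.eq_zero_or_pos e with rfl | he0
  · omega
  rw [Nat.mul_div_cancel_left _ he0]
  by_contra! hd
  interval_cases d <;> simp at heN

theorem Nat.composite_div_of_dvd_of_lt {e N S : ℕ} (he : e ∣ N) (heN : e < N) (hNS : N ∣ S)
    (hlt : N < S) : e ∣ S ∧ N / e ∣ S / e ∧ 1 < S / e ∧ ¬ (S / e).Prime := by
  have hNe := Nat.one_lt_div_of_dvd_of_lt he heN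
  have hNeS := Nat.div_lt_div_of_lt_of_dvd (he.trans hNS) hlt
  exact ⟨he.trans hNS, Nat.div_dvd_div he hNS, hNe.trans hNeS,
    Nat.not_prime_of_dvd_of_lt (Nat.div_dvd_div he hNS) hNe hNeS⟩

theorem pow_lt_one_add_sum_two_pow_two_pow (n m : ℕ) :
    2 ^ n < 1 + ∑ j ∈ range (m + 1), 2 ^ 2 ^ (n + j) := by
  have h0 : 2 ^ 2 ^ n ≤ ∑ j ∈ range (m + 1), 2 ^ 2 ^ (n + j) :=
    single_le_sum (f := fun j => 2 ^ 2 ^ (n + j)) (fun _ _ => Nat.zero_le _) (mem_range.2 m.succ_pos)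
  have := Nat.pow_lt_pow_right one_lt_two n.lt_two_pow_self
  omega

theorem stmt_13_general (N : ℕ)
    (s : ℕ) (hs : s = orderOf (2 : ZMod N))
    (n : ℕ) (hn : 0 < n) (h : 2 ^ n ≡ 1 [MOD s]) (hnN : N ≤ 2 ^ n)
    (a : ℕ) (ha : a = orderOf (2 : ZMod s))
    (l : ℕ)
    (b : ℕ) (hb : b = 2 ^ (l + 1) % s)
    (kl kb : ℕ)
    (hkl : kl = 1 + ∑ j ∈ Finset.range (l + 1), 2 ^ (2 ^ j))
    (hkb : kb = ∑ j ∈ Finset.range a, 2 ^ (b * 2 ^ j))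
    (hd : Nat.gcd kb N ∣ kl)
    (e : ℕ) (he : e ∣ N) (heN : e < N) :
    {m : ℕ | 0 < m ∧
      e ∣ (1 + ∑ j ∈ Finset.range (m + 1), 2 ^ (2 ^ (n + j))) ∧
      (N / e) ∣ (1 + ∑ j ∈ Finset.range (m + 1), 2 ^ (2 ^ (n + j))) / e ∧
      1 < (1 + ∑ j ∈ Finset.range (m + 1), 2 ^ (2 ^ (n + j))) / e ∧
      ¬ Nat.Prime ((1 + ∑ j ∈ Finset.range (m + 1), 2 ^ (2 ^ (n + j))) / e)}.Infinite := by
  have hN : 0 < N := by omega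
  have : NeZero N := ⟨hN.ne'⟩
  have ha0 : 0 < a := ha ▸ orderOf_pos_iff.2 <| isOfFinOrder_iff_pow_eq_one.2
    ⟨n, hn, by simpa using (ZMod.natCast_eq_natCast_iff _ _ _).2 h⟩
  have h2a : 2 ^ a ≡ 1 [MOD s] := by
    rw [← ZMod.natCast_eq_natCast_iff]
    simp [ha]
  have hsum (c : ℕ) : ((1 + ∑ j ∈ range (l + c * a + 1), 2 ^ 2 ^ (n + j) : ℕ) : ZMod N) =
      (kl + c * kb : ℕ) := by
    rw [show l + c * a + 1 = l + 1 + c * a by ring]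
    push_cast
    rw [sum_pow_two_pow_range_add_mul (hs ▸ pow_orderOf_eq_one 2) h
      (hb ▸ (Nat.mod_modEq _ s).symm) h2a c, hkl, hkb]
    push_cast
    ring
  obtain ⟨c₀, hc₀⟩ := Nat.exists_dvd_add_mul_of_gcd_dvd hd
  refine Set.infinite_of_injective_forall_mem (f := fun t => l + (c₀ + N * (t + 1)) * a)
    (fun t t' htt => ?_) (fun t => ?_)
  · have := Nat.eq_of_mul_eq_mul_right ha0 (Nat.add_left_cancel htt)
    have := Nat.eq_of_mul_eq_mul_left hN (Nat.add_left_cancel this)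
    omega
  have hNS : N ∣ 1 + ∑ j ∈ range (l + (c₀ + N * (t + 1)) * a + 1), 2 ^ 2 ^ (n + j) := by
    rw [← ZMod.natCast_eq_zero_iff, hsum, ZMod.natCast_eq_zero_iff,
      show kl + (c₀ + N * (t + 1)) * kb = kl + c₀ * kb + N * ((t + 1) * kb) by ring]
    exact hc₀.add (dvd_mul_right _ _)
  have hc : 0 < c₀ + N * (t + 1) := Nat.add_pos_right _ (Nat.mul_pos hN t.succ_pos)
  exact ⟨Nat.add_pos_right _ (Nat.mul_pos hc ha0), Nat.composite_div_of_dvd_of_lt he heN hNS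
    (hnN.trans_lt (pow_lt_one_add_sum_two_pow_two_pow n _))⟩

theorem stmt_13 (N : ℕ) (hN3 : 3 ≤ N) (hNodd : Odd N) (hNcomp : ¬ Nat.Prime N)
    (s : ℕ) (hs : s = orderOf (2 : ZMod N))
    (n : ℕ) (hn : 0 < n) (h : 2 ^ n ≡ 1 [MOD s]) (hnN : N ≤ 2 ^ n)
    (a : ℕ) (ha : a = orderOf (2 : ZMod s))
    (l : ℕ) (hl : 2 ^ l < s) (hl' : s ≤ 2 ^ (l + 1))
    (b : ℕ) (hb : b = 2 ^ (l + 1) % s)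
    (kl kb : ℕ)
    (hkl : kl = 1 + ∑ j ∈ Finset.range (l + 1), 2 ^ (2 ^ j))
    (hkb : kb = ∑ j ∈ Finset.range a, 2 ^ (b * 2 ^ j))
    (hd : Nat.gcd kb N ∣ kl)
    (e : ℕ) (he : e ∣ N) (he1 : 1 < e) (heN : e < N) :
    {m : ℕ | 0 < m ∧
      e ∣ (1 + ∑ j ∈ Finset.range (m + 1), 2 ^ (2 ^ (n + j))) ∧
      (N / e) ∣ (1 + ∑ j ∈ Finset.range (m + 1), 2 ^ (2 ^ (n + j))) / e ∧
      1 < (1 + ∑ j ∈ Finset.range (m + 1), 2 ^ (2 ^ (n + j))) / e ∧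
      ¬ Nat.Prime ((1 + ∑ j ∈ Finset.range (m + 1), 2 ^ (2 ^ (n + j))) / e)}.Infinite :=
  stmt_13_general N s hs n hn h hnN a ha l b hb kl kb hkl hkb hd e he heN
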